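/- The variance Var(Braid_c) = (tbi²(c)+tbi_p²(c))/(e(c)+e_p(c)) − ((tbi(c)+tbi_p(c))/(e(c)+e_p(c)))² of the braid indices of 2-bridge knots with crossing number c satisfies Var(Braid_c) − (2c/27 − 10/81) → 0 as c → ∞. -/

import Mathlib

/-- `e(c)`, the number of even continued fraction representations with
crossing number `c`, as a real number. -/
noncomputable def eR (c : ℕ) : ℝ := 2 / 3 * (2 ^ (c - 2) - (-1 : ℝ) ^ (c - 2))

/-- `e_p(c)`, the number of (anti-)palindromic representations with
crossing number `c`, as a real number. -/
noncomputable def epR (c : ℕ) : ℝ :=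
  2 / 3 * (2 ^ ((c - 1) / 2) - (-1 : ℝ) ^ ((c - 1) / 2))

/-- The total braid index `tbi(c)`. -/
noncomputable def tbiR (c : ℕ) : ℝ :=
  ((6 * (c : ℝ) + 22) * 2 ^ (c - 2) + (6 * (c : ℝ) - 46) * (-1) ^ c) / 27

/-- The total palindromic braid index `tbi_p(c)`. -/
noncomputable def tbipR (c : ℕ) : ℝ :=
  if Even c then
    ((3 * (c : ℝ) + 13) * 2 ^ (c / 2) + (12 * (c : ℝ) + 14) * (-1) ^ (c / 2)) / 27
  else
    ((6 * (c : ℝ) + 14) * 2 ^ ((c - 1) / 2) - (12 * (c : ℝ) + 8) * (-1) ^ ((c - 1) / 2)) / 27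

/-- The average braid index of 2-bridge knots with crossing number `c`. -/
noncomputable def avgBraid (c : ℕ) : ℝ := (tbiR c + tbipR c) / (eR c + epR c)

/-- The total square braid index `tbi²(c)`. -/
noncomputable def tbi2R (c : ℕ) : ℝ :=
  ((3 * (c : ℝ) ^ 2 + 24 * c + 37) * 2 ^ (c - 1)
    + (12 * (c : ℝ) ^ 2 + 30 * c - 302) * (-1) ^ c) / 81

/-- The total palindromic square braid index `tbi_p²(c)`. -/
noncomputable def tbip2R (c : ℕ) : ℝ :=
  if Even c then
    ((3 * (c : ℝ) ^ 2 + 30 * c + 43) * 2 ^ (c / 2)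
      + (24 * (c : ℝ) ^ 2 + 48 * c + 38) * (-1) ^ (c / 2)) / 81
  else
    ((6 * (c : ℝ) ^ 2 + 36 * c + 14) * 2 ^ ((c - 1) / 2)
      - (24 * (c : ℝ) ^ 2 + 24 * c + 8) * (-1) ^ ((c - 1) / 2)) / 81

/-- The variance of the braid indices of 2-bridge knots with crossing number `c`. -/
noncomputable def varBraid (c : ℕ) : ℝ :=
  (tbi2R c + tbip2R c) / (eR c + epR c)
    - ((tbiR c + tbipR c) / (eR c + epR c)) ^ 2

/-!
Put `w = 2 ^ c`. Up to errors of size `O(c²)`, the non-palindromic counts are `w / 6`,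
`(6c + 22) / 108 · w` and `(3c² + 24c + 37) / 162 · w`, while the palindromic counts are
`O(c² · √2 ^ c)`. For the leading coefficients `a = (3c² + 24c + 37) / 162`,
`t = (6c + 22) / 108`, `e₀ = 1 / 6` one has `a / e₀ - (t / e₀)² = 2c/27 - 10/81` exactly, so the
difference in the theorem only sees the errors; even after multiplication by the (at most
quadratic) leading coefficients they are `O(c² · √2 ^ c) = o(w)`.
-/

open Filter Topology

section Variance

variable {ι : Type*} {l : Filter ι}

theorem tendsto_variance_sub_of_leading {a t τ ε θ α : ι → ℝ} {e₀ : ℝ} (he₀ : e₀ ≠ 0)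
    (hlead : ∀ i, a i * e₀ = t i ^ 2 + τ i * e₀ ^ 2)
    (hε : Tendsto ε l (𝓝 0)) (hθ : Tendsto θ l (𝓝 0)) (hα : Tendsto α l (𝓝 0))
    (haε : Tendsto (a * ε) l (𝓝 0)) (htθ : Tendsto (t * θ) l (𝓝 0))
    (hτε : Tendsto (τ * ε) l (𝓝 0)) :
    Tendsto (fun i => (a i + α i) / (e₀ + ε i) - ((t i + θ i) / (e₀ + ε i)) ^ 2 - τ i)
      l (𝓝 0) := by
  have hden : Tendsto (fun i => (e₀ + ε i) ^ 2) l (𝓝 (e₀ ^ 2)) := by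
    simpa using (hε.const_add e₀).pow 2
  have hnum : Tendsto (fun i => a i * ε i + e₀ * α i + α i * ε i - 2 * (t i * θ i) - θ i ^ 2
      - 2 * e₀ * (τ i * ε i) - τ i * ε i * ε i) l (𝓝 0) := by
    simpa using (((((haε.add (hα.const_mul e₀)).add (hα.mul hε)).sub (htθ.const_mul 2)).sub
      (hθ.pow 2)).sub (hτε.const_mul (2 * e₀))).sub (hτε.mul hε)
  have hne : ∀ᶠ i in l, e₀ + ε i ≠ 0 := (hε.const_add e₀).eventually_ne (by simpa using he₀)
  have hlim := hnum.div hden (pow_ne_zero 2 he₀)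
  rw [zero_div] at hlim
  refine hlim.congr' ?_
  filter_upwards [hne] with i hi
  simp only [Pi.div_apply]
  field_simp
  linear_combination -hlead i

theorem tendsto_variance_sub_of_abs_le {A T E a t τ p g w : ι → ℝ} {e₀ K : ℝ} (he₀ : e₀ ≠ 0)
    (hlead : ∀ i, a i * e₀ = t i ^ 2 + τ i * e₀ ^ 2) (hp : ∀ i, 1 ≤ p i) (hw : ∀ i, 0 < w i)
    (hrate : Tendsto (fun i => p i ^ 2 * g i / w i) l (𝓝 0))
    (hE : ∀ᶠ i in l, |E i - e₀ * w i| ≤ K * g i)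
    (hT : ∀ᶠ i in l, |T i - t i * w i| ≤ K * (p i * g i))
    (hA : ∀ᶠ i in l, |A i - a i * w i| ≤ K * (p i ^ 2 * g i))
    (ha : ∀ i, |a i| ≤ K * p i ^ 2) (ht : ∀ i, |t i| ≤ K * p i) (hτ : ∀ i, |τ i| ≤ K * p i ^ 2) :
    Tendsto (fun i => A i / E i - (T i / E i) ^ 2 - τ i) l (𝓝 0) := by
  have negligible (f : ι → ℝ) (C : ℝ) (hf : ∀ᶠ i in l, |f i * w i| ≤ C * (p i ^ 2 * g i)) :
      Tendsto f l (𝓝 0) := by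
    refine squeeze_zero_norm' ?_ (by simpa using hrate.const_mul C)
    filter_upwards [hf] with i hi
    rw [Real.norm_eq_abs, ← mul_div_assoc, le_div_iff₀ (hw i)]
    rwa [abs_mul, abs_of_pos (hw i)] at hi
  set ε := fun i => (E i - e₀ * w i) / w i
  set θ := fun i => (T i - t i * w i) / w i
  set α := fun i => (A i - a i * w i) / w i
  have hεw (i : ι) : ε i * w i = E i - e₀ * w i := div_mul_cancel₀ _ (hw i).ne'
  have hθw (i : ι) : θ i * w i = T i - t i * w i := div_mul_cancel₀ _ (hw i).ne'
  have hαw (i : ι) : α i * w i = A i - a i * w i := div_mul_cancel₀ _ (hw i).ne'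
  have hε : Tendsto ε l (𝓝 0) := negligible _ K <| by
    filter_upwards [hE] with i hi
    calc |ε i * w i| = |E i - e₀ * w i| := by rw [hεw]
      _ ≤ K * g i := hi
      _ ≤ p i ^ 2 * (K * g i) :=
          le_mul_of_one_le_left ((abs_nonneg _).trans hi) (one_le_pow₀ (hp i))
      _ = K * (p i ^ 2 * g i) := by ring
  have hθ : Tendsto θ l (𝓝 0) := negligible _ K <| by
    filter_upwards [hT] with i hi
    calc |θ i * w i| = |T i - t i * w i| := by rw [hθw]
      _ ≤ K * (p i * g i) := hi
      _ ≤ p i * (K * (p i * g i)) := le_mul_of_one_le_left ((abs_nonneg _).trans hi) (hp i)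
      _ = K * (p i ^ 2 * g i) := by ring
  have hα : Tendsto α l (𝓝 0) := negligible _ K <| by
    filter_upwards [hA] with i hi
    rwa [hαw]
  have haε : Tendsto (a * ε) l (𝓝 0) := negligible _ (K * K) <| by
    filter_upwards [hE] with i hi
    calc |(a * ε) i * w i| = |a i| * |E i - e₀ * w i| := by
          rw [Pi.mul_apply, mul_assoc, hεw, abs_mul]
      _ ≤ (K * p i ^ 2) * (K * g i) :=
          mul_le_mul (ha i) hi (abs_nonneg _) ((abs_nonneg _).trans (ha i))
      _ = K * K * (p i ^ 2 * g i) := by ring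
  have htθ : Tendsto (t * θ) l (𝓝 0) := negligible _ (K * K) <| by
    filter_upwards [hT] with i hi
    calc |(t * θ) i * w i| = |t i| * |T i - t i * w i| := by
          rw [Pi.mul_apply, mul_assoc, hθw, abs_mul]
      _ ≤ (K * p i) * (K * (p i * g i)) :=
          mul_le_mul (ht i) hi (abs_nonneg _) ((abs_nonneg _).trans (ht i))
      _ = K * K * (p i ^ 2 * g i) := by ring
  have hτε : Tendsto (τ * ε) l (𝓝 0) := negligible _ (K * K) <| by
    filter_upwards [hE] with i hi
    calc |(τ * ε) i * w i| = |τ i| * |E i - e₀ * w i| := by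
          rw [Pi.mul_apply, mul_assoc, hεw, abs_mul]
      _ ≤ (K * p i ^ 2) * (K * g i) :=
          mul_le_mul (hτ i) hi (abs_nonneg _) ((abs_nonneg _).trans (hτ i))
      _ = K * K * (p i ^ 2 * g i) := by ring
  refine (tendsto_variance_sub_of_leading he₀ hlead hε hθ hα haε htθ hτε).congr fun i => ?_
  have hwi := (hw i).ne'
  simp only [ε, θ, α]
  field_simp
  ring

end Variance

lemma eR_eq {c : ℕ} (hc : 2 ≤ c) : eR c = 1 / 6 * 2 ^ c - 2 / 3 * (-1) ^ c := by
  obtain ⟨n, rfl⟩ : ∃ n, c = n + 2 := ⟨c - 2, by omega⟩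
  simp only [eR, Nat.add_sub_cancel, pow_add]
  ring

lemma tbiR_eq {c : ℕ} (hc : 2 ≤ c) :
    tbiR c = (6 * c + 22) / 108 * 2 ^ c + (6 * c - 46) / 27 * (-1) ^ c := by
  obtain ⟨n, rfl⟩ : ∃ n, c = n + 2 := ⟨c - 2, by omega⟩
  simp only [tbiR, Nat.add_sub_cancel, pow_add]
  ring

lemma tbi2R_eq {c : ℕ} (hc : 1 ≤ c) :
    tbi2R c = (3 * c ^ 2 + 24 * c + 37) / 162 * 2 ^ c
      + (12 * c ^ 2 + 30 * c - 302) / 81 * (-1) ^ c := by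
  obtain ⟨n, rfl⟩ : ∃ n, c = n + 1 := ⟨c - 1, by omega⟩
  simp only [tbi2R, Nat.add_sub_cancel, pow_add]
  ring

lemma two_pow_le_sqrt_two_pow {m c : ℕ} (h : 2 * m ≤ c) : (2 : ℝ) ^ m ≤ √2 ^ c :=
  calc (2 : ℝ) ^ m = √2 ^ (2 * m) := by rw [pow_mul, Real.sq_sqrt zero_le_two]
    _ ≤ √2 ^ c := pow_le_pow_right₀ Real.one_lt_sqrt_two.le h

lemma one_le_sqrt_two_pow (c : ℕ) : 1 ≤ √2 ^ c := one_le_pow₀ Real.one_lt_sqrt_two.le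

lemma abs_epR_le (c : ℕ) : |epR c| ≤ 2 * √2 ^ c := by
  have h := two_pow_le_sqrt_two_pow (m := (c - 1) / 2) (c := c) (by omega)
  have h0 : (0 : ℝ) ≤ 2 ^ ((c - 1) / 2) := by positivity
  have h1 := one_le_sqrt_two_pow c
  rw [epR]
  rcases neg_one_pow_eq_or ℝ ((c - 1) / 2) with hs | hs <;> rw [hs, abs_le] <;>
    constructor <;> linarith

lemma abs_tbipR_le (c : ℕ) : |tbipR c| ≤ (c + 1) * √2 ^ c := by
  have h1 := one_le_sqrt_two_pow c
  have hc : (0 : ℝ) ≤ c := c.cast_nonneg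
  rw [tbipR]
  split_ifs
  · have h := two_pow_le_sqrt_two_pow (m := c / 2) (c := c) (by omega)
    have h0 : (0 : ℝ) ≤ 2 ^ (c / 2) := by positivity
    rcases neg_one_pow_eq_or ℝ (c / 2) with hs | hs <;> rw [hs, abs_le] <;>
      constructor <;> nlinarith
  · have h := two_pow_le_sqrt_two_pow (m := (c - 1) / 2) (c := c) (by omega)
    have h0 : (0 : ℝ) ≤ 2 ^ ((c - 1) / 2) := by positivity
    rcases neg_one_pow_eq_or ℝ ((c - 1) / 2) with hs | hs <;> rw [hs, abs_le] <;>
      constructor <;> nlinarith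

lemma abs_tbip2R_le (c : ℕ) : |tbip2R c| ≤ (c + 1) ^ 2 * √2 ^ c := by
  have h1 := one_le_sqrt_two_pow c
  have hc : (0 : ℝ) ≤ c := c.cast_nonneg
  rw [tbip2R]
  split_ifs
  · have h := two_pow_le_sqrt_two_pow (m := c / 2) (c := c) (by omega)
    have h0 : (0 : ℝ) ≤ 2 ^ (c / 2) := by positivity
    rcases neg_one_pow_eq_or ℝ (c / 2) with hs | hs <;> rw [hs, abs_le] <;>
      constructor <;> nlinarith
  · have h := two_pow_le_sqrt_two_pow (m := (c - 1) / 2) (c := c) (by omega)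
    have h0 : (0 : ℝ) ≤ 2 ^ ((c - 1) / 2) := by positivity
    rcases neg_one_pow_eq_or ℝ ((c - 1) / 2) with hs | hs <;> rw [hs, abs_le] <;>
      constructor <;> nlinarith

lemma abs_eR_add_epR_sub_le {c : ℕ} (hc : 2 ≤ c) :
    |eR c + epR c - 1 / 6 * 2 ^ c| ≤ 5 * √2 ^ c := by
  have hpal := abs_epR_le c
  have h1 := one_le_sqrt_two_pow c
  rw [eR_eq hc]
  rcases neg_one_pow_eq_or ℝ c with hs | hs <;> rw [hs] <;> rw [abs_le] at * <;>
    constructor <;> linarith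

lemma abs_tbiR_add_tbipR_sub_le {c : ℕ} (hc : 2 ≤ c) :
    |tbiR c + tbipR c - (6 * c + 22) / 108 * 2 ^ c| ≤ 5 * ((c + 1) * √2 ^ c) := by
  have hpal := abs_tbipR_le c
  have h1 := one_le_sqrt_two_pow c
  have hc0 : (0 : ℝ) ≤ c := c.cast_nonneg
  rw [tbiR_eq hc]
  rcases neg_one_pow_eq_or ℝ c with hs | hs <;> rw [hs] <;> rw [abs_le] at * <;>
    constructor <;> nlinarith

lemma abs_tbi2R_add_tbip2R_sub_le {c : ℕ} (hc : 1 ≤ c) :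
    |tbi2R c + tbip2R c - (3 * c ^ 2 + 24 * c + 37) / 162 * 2 ^ c|
      ≤ 5 * ((c + 1) ^ 2 * √2 ^ c) := by
  have hpal := abs_tbip2R_le c
  have h1 := one_le_sqrt_two_pow c
  have hc0 : (0 : ℝ) ≤ c := c.cast_nonneg
  rw [tbi2R_eq hc]
  rcases neg_one_pow_eq_or ℝ c with hs | hs <;> rw [hs] <;> rw [abs_le] at * <;>
    constructor <;> nlinarith

lemma tendsto_sq_mul_sqrt_two_pow_div_two_pow :
    Tendsto (fun c : ℕ => ((c : ℝ) + 1) ^ 2 * √2 ^ c / 2 ^ c) atTop (𝓝 0) := by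
  have h := ((tendsto_pow_const_div_const_pow_of_one_lt 2 Real.one_lt_sqrt_two).comp
    (tendsto_add_atTop_nat 1)).const_mul √2
  rw [mul_zero] at h
  refine h.congr fun c => ?_
  have h2 : (2 : ℝ) ^ c = √2 ^ c * √2 ^ c := by rw [← mul_pow, Real.mul_self_sqrt zero_le_two]
  have hs : (0 : ℝ) < √2 := by positivity
  simp only [Function.comp_apply, h2, pow_succ]
  push_cast
  field_simp

theorem varBraid_asymptotic :
    Filter.Tendsto (fun c : ℕ => varBraid c - (2 * (c : ℝ) / 27 - 10 / 81))
      Filter.atTop (nhds 0) := by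
  refine tendsto_variance_sub_of_abs_le (A := fun c => tbi2R c + tbip2R c)
    (T := fun c => tbiR c + tbipR c) (E := fun c => eR c + epR c)
    (a := fun c => (3 * c ^ 2 + 24 * c + 37) / 162) (t := fun c => (6 * c + 22) / 108)
    (p := fun c => (c : ℝ) + 1) (g := fun c => √2 ^ c) (w := fun c => 2 ^ c)
    (e₀ := 1 / 6) (K := 5)
    (by norm_num) (fun c => by ring) (fun c => by simp) (fun c => by positivity)
    tendsto_sq_mul_sqrt_two_pow_div_two_pow ?_ ?_ ?_ ?_ ?_ ?_
  · filter_upwards [eventually_ge_atTop 2] with c hc using abs_eR_add_epR_sub_le hc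
  · filter_upwards [eventually_ge_atTop 2] with c hc using abs_tbiR_add_tbipR_sub_le hc
  · filter_upwards [eventually_ge_atTop 1] with c hc using abs_tbi2R_add_tbip2R_sub_le hc
  all_goals
    intro c
    have hc : (0 : ℝ) ≤ c := c.cast_nonneg
    rw [abs_le]
    constructor <;> nlinarith
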